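/- Let k, h : [0,U] → ℝ be differentiable with k(0) = h(0) = 0, h(u) < 0 and k(u) < 0 for all u ∈ (0,U], and suppose (k - h)'(u) ≤ (k(u) - h(u))(k(u) + h(u)) for all u ∈ [0,U]. Then k(u) ≤ h(u) for all u ∈ [0,U]. -/
import Mathlib


open Set

theorem stmt5 (U : ℝ) (hU : 0 < U) (k h D : ℝ → ℝ)
    (hkdiff : ∀ u ∈ Icc (0:ℝ) U, DifferentiableAt ℝ k u)
    (hhdiff : ∀ u ∈ Icc (0:ℝ) U, DifferentiableAt ℝ h u)
    (hk0 : k 0 = 0) (hh0 : h 0 = 0)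
    (hkneg : ∀ u ∈ Ioc (0:ℝ) U, k u < 0)
    (hhneg : ∀ u ∈ Ioc (0:ℝ) U, h u < 0)
    (hineq : ∀ u ∈ Icc (0:ℝ) U, deriv (k - h) u ≤ (k u - h u) * (k u + h u)) :
    ∀ u ∈ Icc (0:ℝ) U, k u ≤ h u := by
  set w : ℝ → ℝ := k - h with hw
  have hwdiff : ∀ u ∈ Icc (0:ℝ) U, DifferentiableAt ℝ w u := fun u hu =>
    (hkdiff u hu).sub (hhdiff u hu)
  intro u₀ hu₀
  by_contra hcon
  push_neg at hcon
  have hwu₀ : 0 < w u₀ := by simp [hw, sub_pos, hcon]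
  -- the bad set
  set S : Set ℝ := Icc 0 u₀ ∩ w ⁻¹' (Iic 0) with hS
  have hwcont : ContinuousOn w (Icc 0 u₀) := fun x hx =>
    (hwdiff x ⟨hx.1, hx.2.trans hu₀.2⟩).continuousAt.continuousWithinAt
  have hSclosed : IsClosed S := hwcont.preimage_isClosed_of_isClosed isClosed_Icc isClosed_Iic
  have h0S : (0:ℝ) ∈ S := by
    constructor
    · exact ⟨le_refl 0, hu₀.1⟩
    · simp [hw, hk0, hh0]
  have hSbdd : BddAbove S := ⟨u₀, fun x hx => hx.1.2⟩
  set s := sSup S with hs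
  have hsS : s ∈ S := hSclosed.csSup_mem ⟨0, h0S⟩ hSbdd
  have hs0 : 0 ≤ s := hsS.1.1
  have hsle : s ≤ u₀ := hsS.1.2
  have hws : w s ≤ 0 := hsS.2
  have hslt : s < u₀ := by
    rcases eq_or_lt_of_le hsle with heq | hlt
    · rw [heq] at hws; linarith
    · exact hlt
  have hu₀U : u₀ ≤ U := hu₀.2
  -- on (s, u₀), w is positive
  have hwpos : ∀ x ∈ Ioo s u₀, 0 < w x := by
    intro x hx
    by_contra hxle
    push_neg at hxle
    have : x ∈ S := ⟨⟨hs0.trans hx.1.le, hx.2.le⟩, hxle⟩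
    exact absurd (le_csSup hSbdd this) (not_le.mpr hx.1)
  -- strict antitone on [s, u₀]
  have hanti : StrictAntiOn w (Icc s u₀) := by
    apply strictAntiOn_of_deriv_neg (convex_Icc s u₀)
    · intro x hx
      exact (hwdiff x ⟨hs0.trans hx.1, hx.2.trans hu₀U⟩).continuousAt.continuousWithinAt
    · intro x hx
      rw [interior_Icc] at hx
      have hxIcc : x ∈ Icc (0:ℝ) U := ⟨hs0.trans hx.1.le, hx.2.le.trans hu₀U⟩
      have hwx : 0 < w x := hwpos x hx
      have hx0 : 0 < x := lt_of_le_of_lt hs0 hx.1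
      have hks : k x < 0 := hkneg x ⟨hx0, hxIcc.2⟩
      have hhs : h x < 0 := hhneg x ⟨hx0, hxIcc.2⟩
      calc deriv w x ≤ (k x - h x) * (k x + h x) := hineq x hxIcc
        _ < 0 := mul_neg_of_pos_of_neg (by simpa [hw, sub_pos] using hwx) (by linarith)
  have := hanti ⟨le_refl s, hsle⟩ ⟨hsle, le_refl u₀⟩ hslt
  linarith
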